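/- Let G be a group with finite generating set S, H ≤ G a subgroup with finite generating set T ⊆ S, and g₀ ∈ S with g₀^n ∉ H for all n ≥ 1. If there is α > 0 and k ∈ ℕ with #H_m ≥ α m^k for all m ≥ 1, then there is c > 0 with #G_m ≥ c · m^{k+1} for all m ≥ 1; in particular G does not have polynomial growth of degree at most k (i.e., #G_m / m^k is unbounded). -/
import Mathlib

open Pointwise

/-- The ball of radius `m` in the word metric determined by the finite generating set `S`
(symmetrized and with the identity adjoined): the set of products of at most `m`
generators or inverses of generators. -/
def wordBall {G : Type*} [Group G] [DecidableEq G] (S : Finset G) (m : ℕ) : Finset G :=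
  (insert (1 : G) (S ∪ S⁻¹)) ^ m

section aux
variable {G : Type*} [Group G] [DecidableEq G]

lemma wordBall_mono {S T : Finset G} (hTS : T ⊆ S) {a b : ℕ} (hab : a ≤ b) :
    wordBall T a ⊆ wordBall S b := by
  apply Finset.pow_subset_pow _ (Finset.mem_insert_self _ _) hab
  exact Finset.insert_subset_insert _
    (Finset.union_subset_union hTS (Finset.inv_subset_inv hTS))

lemma wordBall_subset_closure (T : Finset G) (n : ℕ) {x : G}
    (hx : x ∈ wordBall T n) : x ∈ Subgroup.closure (T : Set G) := by
  induction n generalizing x with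
  | zero =>
    simp only [wordBall, pow_zero, Finset.mem_one] at hx
    subst hx; exact Subgroup.one_mem _
  | succ n ih =>
    rw [wordBall, pow_succ, Finset.mem_mul] at hx
    obtain ⟨y, hy, z, hz, rfl⟩ := hx
    refine Subgroup.mul_mem _ (ih hy) ?_
    rcases Finset.mem_insert.1 hz with h | h
    · exact h ▸ Subgroup.one_mem _
    rcases Finset.mem_union.1 h with h | h
    · exact Subgroup.subset_closure h
    · rw [Finset.mem_inv] at h
      obtain ⟨t, ht, rfl⟩ := h
      exact Subgroup.inv_mem _ (Subgroup.subset_closure ht)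

end aux

/-- If `g₀ ∈ S` has no positive power in `H = ⟨T⟩` (`T ⊆ S`) and
`#H_m ≥ α m^k` for all `m ≥ 1`, then `#G_m ≥ c m^(k+1)` for some `c > 0` and all `m ≥ 1`;
in particular `#G_m / m^k` is unbounded. -/
theorem stmt6 {G : Type*} [Group G] [DecidableEq G] (S T : Finset G) (hTS : T ⊆ S)
    (hS : Subgroup.closure (S : Set G) = ⊤)
    (H : Subgroup G) (hH : H = Subgroup.closure (T : Set G))
    (g₀ : G) (hg₀ : g₀ ∈ S) (h0 : ∀ n : ℕ, 1 ≤ n → g₀ ^ n ∉ H)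
    (α : ℝ) (hα : 0 < α) (k : ℕ)
    (hHgrowth : ∀ m : ℕ, 1 ≤ m → α * (m : ℝ) ^ k ≤ (wordBall T m).card) :
    (∃ c : ℝ, 0 < c ∧ ∀ m : ℕ, 1 ≤ m → c * (m : ℝ) ^ (k + 1) ≤ (wordBall S m).card) ∧
    ¬ ∃ C : ℝ, ∀ m : ℕ, 1 ≤ m → ((wordBall S m).card : ℝ) / (m : ℝ) ^ k ≤ C := by
  -- main growth claim
  have key : ∀ m : ℕ, 1 ≤ m →
      (α / 2 ^ (k + 1)) * (m : ℝ) ^ (k + 1) ≤ (wordBall S m).card := by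
    intro m hm
    -- the union of translates
    set U : Finset G := (Finset.range m).biUnion (fun j => g₀ ^ j • wordBall T (m - j)) with hU
    have hdisj : ∀ i ∈ Finset.range m, ∀ j ∈ Finset.range m, i ≠ j →
        Disjoint (g₀ ^ i • wordBall T (m - i)) (g₀ ^ j • wordBall T (m - j)) := by
      have main : ∀ i j : ℕ, i < j →
          Disjoint (g₀ ^ i • wordBall T (m - i)) (g₀ ^ j • wordBall T (m - j)) := by
        intro i j hij
        rw [Finset.disjoint_left]
        rintro x hxi hxj
        rw [Finset.mem_smul_finset] at hxi hxj
        obtain ⟨a, ha, rfl⟩ := hxi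
        obtain ⟨b, hb, hba⟩ := hxj
        have hba' : g₀ ^ (j - i) = a * b⁻¹ := by
          have h1 : g₀ ^ j * b = g₀ ^ i * a := hba
          have hji : g₀ ^ i * g₀ ^ (j - i) = g₀ ^ j := by
            rw [← pow_add]; congr 1; omega
          rw [← hji, mul_assoc] at h1
          have h2 := mul_left_cancel h1
          rw [← h2, mul_inv_cancel_right]
        apply h0 (j - i) (by omega)
        rw [hH, hba']
        exact Subgroup.mul_mem _ (wordBall_subset_closure T _ ha)
          (Subgroup.inv_mem _ (wordBall_subset_closure T _ hb))
      intro i hi j hj hij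
      rcases lt_or_gt_of_ne hij with h | h
      · exact main i j h
      · exact (main j i h).symm
    have hUsub : U ⊆ wordBall S m := by
      intro x hx
      rw [hU, Finset.mem_biUnion] at hx
      obtain ⟨j, hj, hx⟩ := hx
      rw [Finset.mem_smul_finset] at hx
      obtain ⟨a, ha, rfl⟩ := hx
      have h1 : g₀ ^ j ∈ wordBall S j :=
        Finset.pow_mem_pow (Finset.mem_insert_of_mem (Finset.mem_union_left _ hg₀))
      have h2 : a ∈ wordBall S (m - j) := wordBall_mono hTS le_rfl ha
      have : g₀ ^ j * a ∈ wordBall S j * wordBall S (m - j) :=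
        Finset.mul_mem_mul h1 h2
      have heq : wordBall S j * wordBall S (m - j) = wordBall S m := by
        unfold wordBall; rw [← pow_add]
        congr 1
        have := Finset.mem_range.1 hj; omega
      rw [smul_eq_mul, ← heq]
      exact this
    have hcard : ∑ j ∈ Finset.range m, ((wordBall T (m - j)).card : ℝ)
        ≤ (wordBall S m).card := by
      have := Finset.card_biUnion hdisj
      calc ∑ j ∈ Finset.range m, ((wordBall T (m - j)).card : ℝ)
          = (U.card : ℝ) := by
            rw [hU, this]; push_cast
            exact Finset.sum_congr rfl fun j _ => by rw [Finset.card_smul_finset]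
        _ ≤ (wordBall S m).card := by
            exact_mod_cast Finset.card_le_card hUsub
    -- lower bound for the sum
    have hsum : (α / 2 ^ (k + 1)) * (m : ℝ) ^ (k + 1)
        ≤ ∑ j ∈ Finset.range m, ((wordBall T (m - j)).card : ℝ) := by
      have hhalf : (m + 1) / 2 ≤ m := by omega
      have step1 : ∑ j ∈ Finset.range ((m + 1) / 2), ((wordBall T (m - j)).card : ℝ)
          ≤ ∑ j ∈ Finset.range m, ((wordBall T (m - j)).card : ℝ) := by
        apply Finset.sum_le_sum_of_subset_of_nonneg
        · exact Finset.range_subset_range.2 hhalf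
        · intros; positivity
      refine le_trans ?_ step1
      have step2 : ∀ j ∈ Finset.range ((m + 1) / 2),
          α * ((m : ℝ) / 2) ^ k ≤ ((wordBall T (m - j)).card : ℝ) := by
        intro j hj
        rw [Finset.mem_range] at hj
        have h1 : 1 ≤ m - j := by omega
        refine le_trans ?_ (hHgrowth (m - j) h1)
        apply mul_le_mul_of_nonneg_left _ hα.le
        apply pow_le_pow_left₀ (by positivity)
        rw [div_le_iff₀ (by norm_num)]
        exact_mod_cast Nat.cast_le.2 (by omega : m ≤ (m - j) * 2)
      have step3 : ((((m + 1) / 2 : ℕ)) : ℝ) * (α * ((m : ℝ) / 2) ^ k)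
          ≤ ∑ j ∈ Finset.range ((m + 1) / 2), ((wordBall T (m - j)).card : ℝ) := by
        calc ((((m + 1) / 2 : ℕ)) : ℝ) * (α * ((m : ℝ) / 2) ^ k)
            = ∑ _j ∈ Finset.range ((m + 1) / 2), α * ((m : ℝ) / 2) ^ k := by
              rw [Finset.sum_const, Finset.card_range, nsmul_eq_mul]
          _ ≤ _ := Finset.sum_le_sum step2
      refine le_trans ?_ step3
      have hcnt : (m : ℝ) / 2 ≤ (((m + 1) / 2 : ℕ) : ℝ) := by
        rw [div_le_iff₀ (by norm_num)]
        exact_mod_cast Nat.cast_le.2 (by omega : m ≤ (m + 1) / 2 * 2)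
      have : (α / 2 ^ (k + 1)) * (m : ℝ) ^ (k + 1)
          = ((m : ℝ) / 2) * (α * ((m : ℝ) / 2) ^ k) := by
        rw [div_pow]; ring
      rw [this]
      apply mul_le_mul_of_nonneg_right hcnt (by positivity)
    linarith
  have hc : (0 : ℝ) < α / 2 ^ (k + 1) := by positivity
  constructor
  · exact ⟨α / 2 ^ (k + 1), hc, key⟩
  · rintro ⟨C, hC⟩
    set c := α / 2 ^ (k + 1)
    obtain ⟨m, hm⟩ := exists_nat_gt (max 1 (C / c))
    have hm1 : 1 ≤ m := by
      have := lt_of_le_of_lt (le_max_left 1 (C / c)) hm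
      exact_mod_cast Nat.one_le_iff_ne_zero.2 (by rintro rfl; simp at this; linarith)
    have h1 := key m hm1
    have h2 := hC m hm1
    have hmpos : (0 : ℝ) < (m : ℝ) := by exact_mod_cast hm1
    have hmk : (0 : ℝ) < (m : ℝ) ^ k := by positivity
    rw [div_le_iff₀ hmk] at h2
    have : c * (m : ℝ) ^ (k + 1) ≤ C * (m : ℝ) ^ k := le_trans h1 h2
    rw [pow_succ] at this
    have hCm : C / c < m := lt_of_le_of_lt (le_max_right _ _) hm
    rw [div_lt_iff₀ hc] at hCm
    nlinarith
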